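/- For 2 ≤ k ≤ n-2, let T_{k,n} be a snake (zig-zag) triangulation of the convex n-gon, and let C_k(T_{k,n}) be the set of k-subsets of [n] that are disjoint unions of exactly two cyclic intervals whose starting points form a chord of T_{k,n}. Then C_k(T_{k,n}) consists of (k-1)(n-k-1) pairwise non-crossing k-subsets of [n]. -/

import Mathlib

/-- The position of `x` in the cyclic order on `ℤ/n` starting at `i`. -/
def ord {n : ℕ} (i x : ZMod n) : ℕ := (x - i).val

/-- Two finite sets of naturals intertwine: they have the same cardinality and their
sorted elements satisfy `a₁ < b₁ < a₂ < b₂ < ⋯ < a_l < b_l`. -/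
def NatIntertwines (A B : Finset ℕ) : Prop :=
  A.card = B.card ∧
    List.Chain' (· < ·)
      (((A.sort (· ≤ ·)).zip (B.sort (· ≤ ·))).flatMap fun p => [p.1, p.2])

/-- Two finite subsets of `ℤ/n` intertwine under some cyclic ordering of `[n]`. -/
def CycIntertwines {n : ℕ} (A B : Finset (ZMod n)) : Prop :=
  ∃ i : ZMod n, NatIntertwines (A.image (ord i)) (B.image (ord i))

/-- Two subsets `I`, `J` of `ℤ/n` are (cyclically) `l`-intertwining: there are
`l`-subsets `I' ⊆ I \ J` and `J' ⊆ J \ I` which intertwine (in either order) under some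
cyclic ordering. -/
def CycLIntertwines {n : ℕ} (l : ℕ) (I J : Finset (ZMod n)) : Prop :=
  ∃ I' J' : Finset (ZMod n), I' ⊆ I \ J ∧ J' ⊆ J \ I ∧ I'.card = l ∧ J'.card = l ∧
    (CycIntertwines I' J' ∨ CycIntertwines J' I')

/-- The set of left endpoints of `S ⊆ ℤ/n`: elements of `S` whose predecessor is not
in `S`. -/
def leftEnd {n : ℕ} (S : Finset (ZMod n)) : Finset (ZMod n) :=
  S.filter fun x => x - 1 ∉ S

/-- The gap vector of a sorted list of positions: consecutive differences minus 2,
cyclically (arithmetic modulo `n`). -/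
def phiList (n : ℕ) (L : List ℕ) : List ℕ :=
  (L.zip (L.rotate 1)).map fun p => (p.2 + n - p.1 - 2) % n

/-- The map `φᵢ` of Definition 3.4: the gap vector of an `l`-subset of `ℤ/n`, listed in
the cyclic order starting at `i`. -/
def phi {n : ℕ} (i : ZMod n) (T : Finset (ZMod n)) : List ℕ :=
  phiList n ((T.image (ord i)).sort (· ≤ ·))

/-- A slice: a non-intertwining collection of `C(n-l-1, l-1)` `l`-subsets of `ℤ/n`, each
with cyclic gaps at least 2, such that for some `i` the gap-vector map `φᵢ` is a bijection
onto the `l`-tuples of nonnegative integers summing to `n - 2l`. -/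
def IsSlice (n l : ℕ) (𝒯 : Finset (Finset (ZMod n))) : Prop :=
  𝒯.card = (n - l - 1).choose (l - 1) ∧
    (∀ T ∈ 𝒯, T.card = l) ∧
    (∀ T ∈ 𝒯, ∀ x ∈ T, x + 1 ∉ T) ∧
    (∀ T ∈ 𝒯, ∀ T' ∈ 𝒯, ¬ CycIntertwines T T') ∧
    ∃ i : ZMod n, Set.BijOn (phi i) ↑𝒯
      {L : List ℕ | L.length = l ∧ L.sum = n - 2 * l}

/-- `C_k(𝒯)`: the `k`-subsets of `ℤ/n` which are `l`-ple intervals whose set of left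
endpoints belongs to `𝒯`. -/
def Ck (n k : ℕ) (𝒯 : Finset (Finset (ZMod n))) : Set (Finset (ZMod n)) :=
  {S : Finset (ZMod n) | S.card = k ∧ leftEnd S ∈ 𝒯}


/-!
A `k`-subset `S ⊊ ℤ/n` whose left endpoints are `x ≠ y` is `[x, x + a) ∪ [y, y + b)` with
`a + b = k`, `a < ord x y` and `b < n - ord x y`, and every such union has left endpoints
`{x, y}`; so a chord of span `d` contributes `splitCount n k d` members to `C_k`. The first
entry of `φᵢ T` is the span of the chord `T` minus 2, and the slice condition makes `φᵢ` a
bijection onto `{[e, n - 4 - e]}`, so every span in `[2, n - 2]` occurs exactly once;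
summing `splitCount` over them gives `(k - 1)(n - k - 1)`.

If `p, p' ∈ I \ J` and `q, q' ∈ J \ I` alternate around the circle, walking backwards from
each of them inside its own set stops at a left endpoint lying after the preceding one of the
four points. Hence the left endpoints of `I` and `J` alternate as well, and two chords of the
triangulation would cross.
-/

section CyclicOrder

variable {n : ℕ}

@[simp] lemma ord_self (i : ZMod n) : ord i i = 0 := by simp [ord]

lemma ord_add_natCast (i : ZMod n) {t : ℕ} (ht : t < n) : ord i (i + t) = t := by
  simpa [ord] using ZMod.val_cast_of_lt ht

lemma add_natCast_sub_one (x : ZMod n) {c : ℕ} (hc : 1 ≤ c) :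
    x + (c : ZMod n) - 1 = x + ((c - 1 : ℕ) : ZMod n) := by
  rw [Nat.cast_sub hc]; push_cast; ring

variable [NeZero n]

lemma ord_lt (i x : ZMod n) : ord i x < n := ZMod.val_lt _

lemma ord_injective (i : ZMod n) : Function.Injective (ord i) := fun x y h => by
  simpa using congrArg (· + i) (ZMod.val_injective n h)

lemma ord_eq_zero_iff {i x : ZMod n} : ord i x = 0 ↔ x = i := by
  rw [← ord_self i, (ord_injective i).eq_iff]

lemma ord_pos {i x : ZMod n} (h : x ≠ i) : 0 < ord i x :=
  Nat.pos_of_ne_zero (ord_eq_zero_iff.not.mpr h)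

lemma add_natCast_ord (i x : ZMod n) : i + (ord i x : ZMod n) = x := by
  simp [ord, ZMod.natCast_val, ZMod.cast_id]

lemma ord_eq_add_ord_mod (i x y : ZMod n) : ord i x = (ord i y + ord y x) % n := by
  rw [ord, show x - i = (y - i) + (x - y) by ring, ZMod.val_add]; rfl

lemma ord_eq_add_of_lt {i x y : ZMod n} (h : ord i y + ord y x < n) :
    ord i x = ord i y + ord y x := by
  rw [ord_eq_add_ord_mod i x y, Nat.mod_eq_of_lt h]

lemma ord_eq_sub_of_le {i x y : ZMod n} (h : ord i y ≤ ord i x) :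
    ord y x = ord i x - ord i y := by
  have hsum := ord_eq_add_ord_mod i x y
  have := ord_lt i x; have := ord_lt y x
  rcases Nat.lt_or_ge (ord i y + ord y x) n with hlt | hge
  · rw [Nat.mod_eq_of_lt hlt] at hsum; omega
  · rw [Nat.mod_eq_sub_mod hge, Nat.mod_eq_of_lt (by omega)] at hsum; omega

lemma ord_swap {x y : ZMod n} (h : x ≠ y) : ord y x = n - ord x y := by
  have hsum := ord_eq_add_ord_mod x x y
  have := ord_pos h; have := ord_lt x y; have := ord_lt y x
  rw [ord_self] at hsum
  rcases Nat.lt_or_ge (ord x y + ord y x) n with hlt | hge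
  · rw [Nat.mod_eq_of_lt hlt] at hsum; omega
  · rw [Nat.mod_eq_sub_mod hge, Nat.mod_eq_of_lt (by omega)] at hsum; omega

lemma sub_one_eq_add_natCast_ord {x y : ZMod n} (h : x ≠ y) :
    y - 1 = x + ((ord x y - 1 : ℕ) : ZMod n) := by
  rw [← add_natCast_sub_one x (ord_pos h.symm), add_natCast_ord]

lemma ord_sub_one_self (x : ZMod n) : ord x (x - 1) = n - 1 := by
  have h : x - 1 = x + ((n - 1 : ℕ) : ZMod n) := by
    rw [Nat.cast_sub NeZero.one_le]; simp [sub_eq_add_neg]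
  rw [h, ord_add_natCast x (by have := NeZero.pos n; omega)]

end CyclicOrder

section LeftEnd

variable {n : ℕ}

lemma mem_leftEnd {S : Finset (ZMod n)} {x : ZMod n} :
    x ∈ leftEnd S ↔ x ∈ S ∧ x - 1 ∉ S := Finset.mem_filter

variable [NeZero n]

/-- Walking backwards from `p ∈ S` towards `q ∉ S` one reaches a left endpoint `t` of `S`,
and the whole cyclic interval from `t` to `p` lies in `S` (positions measured from `q`). -/
lemma exists_mem_leftEnd_between {S : Finset (ZMod n)} {q : ZMod n} (hq : q ∉ S) :
    ∀ m, ∀ p ∈ S, ord q p = m → ∃ t ∈ leftEnd S, 0 < ord q t ∧ ord q t ≤ m ∧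
      ∀ j, ord q t ≤ j → j ≤ m → q + (j : ZMod n) ∈ S := by
  intro m
  induction m with
  | zero =>
    intro p hp hm
    exact absurd (ord_eq_zero_iff.mp hm ▸ hp) hq
  | succ m ih =>
    intro p hp hm
    have hpq : p ≠ q := fun h => hq (h ▸ hp)
    have hp_eq : q + ((m + 1 : ℕ) : ZMod n) = p := hm ▸ add_natCast_ord q p
    by_cases hp1 : p - 1 ∈ S
    · have hm' : ord q (p - 1) = m := by
        rw [sub_one_eq_add_natCast_ord hpq.symm, hm, Nat.add_sub_cancel,
          ord_add_natCast q (by have := ord_lt q p; omega)]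
      obtain ⟨t, ht, ht0, htm, hwalk⟩ := ih (p - 1) hp1 hm'
      refine ⟨t, ht, ht0, by omega, fun j hj hjm => ?_⟩
      rcases Nat.lt_or_ge j (m + 1) with hj' | hj'
      · exact hwalk j hj (by omega)
      · rwa [show j = m + 1 by omega, hp_eq]
    · refine ⟨p, mem_leftEnd.mpr ⟨hp, hp1⟩, hm ▸ ord_pos hpq, hm.le, fun j hj hjm => ?_⟩
      rwa [show j = m + 1 by omega, hp_eq]

lemma exists_mem_leftEnd_forall_add_mem {S : Finset (ZMod n)} {q z : ZMod n} (hq : q ∉ S)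
    (hz : z ∈ S) : ∃ t ∈ leftEnd S, ∀ s ≤ ord t z, t + (s : ZMod n) ∈ S := by
  obtain ⟨t, ht, -, htz, hwalk⟩ := exists_mem_leftEnd_between hq _ z hz rfl
  refine ⟨t, ht, fun s hs => ?_⟩
  rw [ord_eq_sub_of_le htz] at hs
  have h := hwalk (ord q t + s) (by omega) (by omega)
  rwa [Nat.cast_add, ← add_assoc, add_natCast_ord] at h

end LeftEnd

def cycInterval {n : ℕ} (x : ZMod n) (a : ℕ) : Finset (ZMod n) :=
  (Finset.range a).image fun t : ℕ => x + (t : ZMod n)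

section CycInterval

variable {n : ℕ}

lemma card_cycInterval {a : ℕ} (ha : a ≤ n) (x : ZMod n) : (cycInterval x a).card = a := by
  rw [cycInterval, Finset.card_image_of_injOn, Finset.card_range]
  intro s hs t ht hst
  simp only [Finset.coe_range, Set.mem_Iio] at hs ht
  rw [← ord_add_natCast x (t := s) (by omega), ← ord_add_natCast x (t := t) (by omega)]
  exact congrArg (ord x) hst

lemma cycInterval_subset {a : ℕ} {x : ZMod n} {S : Finset (ZMod n)}
    (h : ∀ t < a, x + (t : ZMod n) ∈ S) : cycInterval x a ⊆ S := by
  simp only [cycInterval, Finset.image_subset_iff, Finset.mem_range]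
  exact h

lemma self_mem_cycInterval {a : ℕ} (ha : 0 < a) (x : ZMod n) : x ∈ cycInterval x a :=
  Finset.mem_image.mpr ⟨0, Finset.mem_range.mpr ha, by simp⟩

variable [NeZero n]

lemma mem_cycInterval {a : ℕ} (ha : a ≤ n) {x z : ZMod n} :
    z ∈ cycInterval x a ↔ ord x z < a := by
  simp only [cycInterval, Finset.mem_image, Finset.mem_range]
  constructor
  · rintro ⟨t, ht, rfl⟩
    rwa [ord_add_natCast x (by omega)]
  · exact fun h => ⟨ord x z, h, add_natCast_ord x z⟩

lemma exists_cycInterval_subset_add_notMem {S : Finset (ZMod n)} (hS : S.card < n)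
    {x : ZMod n} (hx : x ∈ S) :
    ∃ a, 0 < a ∧ a < n ∧ cycInterval x a ⊆ S ∧ x + (a : ZMod n) ∉ S := by
  obtain ⟨w, hw⟩ : ∃ w, w ∉ S := by
    by_contra! h
    rw [Finset.eq_univ_iff_forall.mpr h, Finset.card_univ, ZMod.card] at hS
    exact lt_irrefl n hS
  have hwx : w ≠ x := fun h => hw (h ▸ hx)
  have hex : ∃ t : ℕ, 0 < t ∧ x + (t : ZMod n) ∉ S :=
    ⟨ord x w, ord_pos hwx, by rwa [add_natCast_ord]⟩
  obtain ⟨ha, hgap⟩ := Nat.find_spec hex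
  refine ⟨Nat.find hex, ha, ?_, cycInterval_subset fun t ht => ?_, hgap⟩
  · exact (Nat.find_min' hex ⟨ord_pos hwx, by rwa [add_natCast_ord]⟩).trans_lt (ord_lt x w)
  · rcases Nat.eq_zero_or_pos t with rfl | ht0
    · simpa using hx
    · by_contra hc
      exact Nat.find_min hex ht ⟨ht0, hc⟩

end CycInterval

section TwoIntervals

variable {n : ℕ} [NeZero n]

lemma disjoint_cycInterval {x y : ZMod n} {a b : ℕ}
    (ha : a + 1 ≤ ord x y) (hb : b + 1 ≤ n - ord x y) :
    Disjoint (cycInterval x a) (cycInterval y b) := by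
  have := ord_lt x y
  rw [Finset.disjoint_left]
  intro z hza hzb
  rw [mem_cycInterval (by omega)] at hza
  rw [mem_cycInterval (by omega)] at hzb
  have := ord_eq_add_of_lt (i := x) (x := z) (y := y) (by omega)
  omega

lemma card_cycInterval_union {x y : ZMod n} {a b : ℕ}
    (ha : a + 1 ≤ ord x y) (hb : b + 1 ≤ n - ord x y) :
    (cycInterval x a ∪ cycInterval y b).card = a + b := by
  have := ord_lt x y
  rw [Finset.card_union_of_disjoint (disjoint_cycInterval ha hb),
    card_cycInterval (by omega), card_cycInterval (by omega)]

lemma leftEnd_cycInterval_union {x y : ZMod n} {a b : ℕ} (ha0 : 0 < a) (hb0 : 0 < b)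
    (ha : a + 1 ≤ ord x y) (hb : b + 1 ≤ n - ord x y) :
    leftEnd (cycInterval x a ∪ cycInterval y b) = {x, y} := by
  have := ord_lt x y
  have hxy : x ≠ y := fun h => by rw [h, ord_self] at ha; omega
  have hyx := ord_swap hxy
  have hmemx : ∀ z, z ∈ cycInterval x a ↔ ord x z < a := fun z => mem_cycInterval (by omega)
  have hmemy : ∀ z, z ∈ cycInterval y b ↔ ord y z < b := fun z => mem_cycInterval (by omega)
  have hx1 : ord y (x - 1) = n - ord x y - 1 := by
    rw [sub_one_eq_add_natCast_ord hxy.symm, hyx, ord_add_natCast y (by omega)]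
  have hy1 : ord x (y - 1) = ord x y - 1 := by
    rw [sub_one_eq_add_natCast_ord hxy, ord_add_natCast x (by omega)]
  have hsucc : ∀ {u z : ZMod n}, z ≠ u → ord u (z - 1) = ord u z - 1 := fun {u z} h => by
    rw [sub_one_eq_add_natCast_ord h.symm, ord_add_natCast u (by have := ord_lt u z; omega)]
  ext z
  simp only [mem_leftEnd, Finset.mem_union, Finset.mem_insert, Finset.mem_singleton, hmemx,
    hmemy]
  constructor
  · rintro ⟨hz | hz, hz1⟩
    · by_contra! h
      have := ord_pos h.1
      exact hz1 (Or.inl (by rw [hsucc h.1]; omega))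
    · by_contra! h
      have := ord_pos h.2
      exact hz1 (Or.inr (by rw [hsucc h.2]; omega))
  · rintro (rfl | rfl)
    · simp only [ord_self, ord_sub_one_self, hx1]; omega
    · simp only [ord_self, ord_sub_one_self, hy1]; omega

lemma eq_cycInterval_union_of_leftEnd_eq {S : Finset (ZMod n)} (hS : S.card < n)
    {x y : ZMod n} (hxy : x ≠ y) (hLE : leftEnd S = {x, y}) :
    ∃ a b, 0 < a ∧ 0 < b ∧ a + 1 ≤ ord x y ∧ b + 1 ≤ n - ord x y ∧
      S = cycInterval x a ∪ cycInterval y b := by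
  have hx := mem_leftEnd.mp (hLE ▸ Finset.mem_insert_self x {y})
  have hy := mem_leftEnd.mp (hLE ▸ Finset.mem_insert_of_mem (Finset.mem_singleton_self y))
  obtain ⟨a, ha0, han, haS, hagap⟩ := exists_cycInterval_subset_add_notMem hS hx.1
  obtain ⟨b, hb0, hbn, hbS, hbgap⟩ := exists_cycInterval_subset_add_notMem hS hy.1
  have hyx := ord_swap hxy
  have := ord_pos hxy.symm
  have ha : a + 1 ≤ ord x y := by
    by_contra! h
    refine hy.2 (haS ((mem_cycInterval han.le).mpr ?_))
    rw [sub_one_eq_add_natCast_ord hxy, ord_add_natCast x (by have := ord_lt x y; omega)]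
    omega
  have hb : b + 1 ≤ n - ord x y := by
    by_contra! h
    refine hx.2 (hbS ((mem_cycInterval hbn.le).mpr ?_))
    rw [sub_one_eq_add_natCast_ord hxy.symm, ord_add_natCast y (by have := ord_lt y x; omega)]
    omega
  refine ⟨a, b, ha0, hb0, ha, hb, ?_⟩
  refine (Finset.union_subset haS hbS).antisymm' fun z hz => ?_
  obtain ⟨t, ht, hwalk⟩ := exists_mem_leftEnd_forall_add_mem hagap hz
  rw [hLE, Finset.mem_insert, Finset.mem_singleton] at ht
  rcases ht with rfl | rfl
  · refine Finset.mem_union_left _ ((mem_cycInterval han.le).mpr ?_)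
    by_contra! h
    exact hagap (hwalk a h)
  · refine Finset.mem_union_right _ ((mem_cycInterval hbn.le).mpr ?_)
    by_contra! h
    exact hbgap (hwalk b h)

lemma add_natCast_notMem_cycInterval_union {x y : ZMod n} {a b : ℕ}
    (ha : a + 1 ≤ ord x y) (hb : b + 1 ≤ n - ord x y) :
    x + (a : ZMod n) ∉ cycInterval x a ∪ cycInterval y b := by
  have := ord_lt x y
  have hxy : x ≠ y := fun h => by rw [h, ord_self] at ha; omega
  have hyx := ord_swap hxy
  have hxa : x + (a : ZMod n) = y + ((ord y x + a : ℕ) : ZMod n) := by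
    rw [Nat.cast_add, ← add_assoc, add_natCast_ord]
  rw [Finset.mem_union, mem_cycInterval (by omega), mem_cycInterval (by omega),
    ord_add_natCast x (by omega), hxa, ord_add_natCast y (by omega)]
  omega

lemma eq_of_cycInterval_union_eq {x y : ZMod n} {a a' b b' : ℕ}
    (ha : a + 1 ≤ ord x y) (hb : b + 1 ≤ n - ord x y)
    (ha' : a' + 1 ≤ ord x y) (hb' : b' + 1 ≤ n - ord x y)
    (h : cycInterval x a ∪ cycInterval y b = cycInterval x a' ∪ cycInterval y b') :
    a = a' := by
  have := ord_lt x y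
  by_contra hne
  rcases Nat.lt_or_gt_of_ne hne with hlt | hlt
  · refine add_natCast_notMem_cycInterval_union ha hb (h ▸ Finset.mem_union_left _ ?_)
    rwa [mem_cycInterval (by omega), ord_add_natCast x (by omega)]
  · refine add_natCast_notMem_cycInterval_union ha' hb' (h ▸ Finset.mem_union_left _ ?_)
    rwa [mem_cycInterval (by omega), ord_add_natCast x (by omega)]

end TwoIntervals

def leftEndFiber {n : ℕ} [NeZero n] (k : ℕ) (T : Finset (ZMod n)) :
    Finset (Finset (ZMod n)) :=
  Finset.univ.filter fun S => S.card = k ∧ leftEnd S = T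

def splitCount (n k d : ℕ) : ℕ :=
  ((Finset.Icc 1 (k - 1)).filter fun a => a + 1 ≤ d ∧ k - a + 1 ≤ n - d).card

section Counting

variable {n : ℕ} [NeZero n]

lemma card_leftEndFiber {k : ℕ} (hk : k < n) {x y : ZMod n} (hxy : x ≠ y) :
    (leftEndFiber k {x, y}).card = splitCount n k (ord x y) := by
  have hfiber : leftEndFiber k {x, y} =
      ((Finset.Icc 1 (k - 1)).filter fun a => a + 1 ≤ ord x y ∧ k - a + 1 ≤ n - ord x y).image
        fun a => cycInterval x a ∪ cycInterval y (k - a) := by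
    ext S
    simp only [leftEndFiber, Finset.mem_filter, Finset.mem_univ, true_and, Finset.mem_image,
      Finset.mem_Icc]
    constructor
    · rintro ⟨hSk, hLE⟩
      obtain ⟨a, b, ha0, hb0, ha, hb, rfl⟩ :=
        eq_cycInterval_union_of_leftEnd_eq (hSk ▸ hk) hxy hLE
      rw [card_cycInterval_union ha hb] at hSk
      exact ⟨a, ⟨⟨ha0, by omega⟩, ha, by omega⟩, by rw [show k - a = b by omega]⟩
    · rintro ⟨a, ⟨⟨ha0, hak⟩, ha, hb⟩, rfl⟩
      exact ⟨by rw [card_cycInterval_union ha (by omega)]; omega,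
        leftEnd_cycInterval_union ha0 (by omega) ha (by omega)⟩
  rw [hfiber, splitCount, Finset.card_image_of_injOn]
  intro a ha a' ha' h
  obtain ⟨-, ha, hb⟩ := Finset.mem_filter.mp ha
  obtain ⟨-, ha', hb'⟩ := Finset.mem_filter.mp ha'
  exact eq_of_cycInterval_union_eq ha (by omega) ha' (by omega) h

lemma Ck_eq_biUnion_leftEndFiber (k : ℕ) (𝕋 : Finset (Finset (ZMod n))) :
    Ck n k 𝕋 = ↑(𝕋.biUnion (leftEndFiber k)) := by
  ext S
  simp [Ck, leftEndFiber]

lemma ncard_Ck (k : ℕ) (𝕋 : Finset (Finset (ZMod n))) :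
    (Ck n k 𝕋).ncard = ∑ T ∈ 𝕋, (leftEndFiber k T).card := by
  rw [Ck_eq_biUnion_leftEndFiber, Set.ncard_coe_finset, Finset.card_biUnion]
  intro T _ T' _ hne
  refine Finset.disjoint_left.mpr fun S hS hS' => hne ?_
  rw [leftEndFiber, Finset.mem_filter] at hS hS'
  exact hS.2.2.symm.trans hS'.2.2

end Counting

lemma Finset.exists_eq_pair_lt_of_card_eq_two {α β : Type*} [DecidableEq α] [LinearOrder β]
    {f : α → β} (hf : Function.Injective f) {T : Finset α} (hT : T.card = 2) :
    ∃ x y, f x < f y ∧ T = {x, y} := by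
  obtain ⟨x, y, hxy, rfl⟩ := Finset.card_eq_two.mp hT
  rcases lt_or_gt_of_ne (hf.ne hxy) with h | h
  exacts [⟨x, y, h, rfl⟩, ⟨y, x, h, Finset.pair_comm x y⟩]

lemma Finset.eq_pair_of_card_eq_two {α : Type*} [DecidableEq α] {T : Finset α}
    (hT : T.card = 2) {u v : α} (hu : u ∈ T) (hv : v ∈ T) (huv : u ≠ v) : T = {u, v} :=
  (Finset.eq_of_subset_of_card_le (by simp [Finset.insert_subset_iff, hu, hv])
    (by rw [hT, Finset.card_pair huv])).symm

lemma Finset.sort_pair {a b : ℕ} (h : a < b) : ({a, b} : Finset ℕ).sort (· ≤ ·) = [a, b] := by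
  rw [Finset.sort_insert _ (by simpa using h.le) (by simpa using h.ne), Finset.sort_singleton]

lemma headD_bijOn_length_eq_two (m : ℕ) :
    Set.BijOn (fun L : List ℕ => L.headD 0) {L | L.length = 2 ∧ L.sum = m} (Set.Iic m) := by
  refine ⟨?_, ?_, fun e (he : e ≤ m) => ⟨[e, m - e], ⟨rfl, by simp; omega⟩, rfl⟩⟩
  · rintro L ⟨hL, hsum⟩
    obtain ⟨a, b, rfl⟩ := List.length_eq_two.mp hL
    simp only [List.sum_cons, List.sum_nil] at hsum
    simp only [List.headD_cons, Set.mem_Iic]; omega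
  · rintro L ⟨hL, hsum⟩ L' ⟨hL', hsum'⟩ (h : L.headD 0 = L'.headD 0)
    obtain ⟨a, b, rfl⟩ := List.length_eq_two.mp hL
    obtain ⟨a', b', rfl⟩ := List.length_eq_two.mp hL'
    simp only [List.sum_cons, List.sum_nil, List.headD_cons] at hsum hsum' h
    simp only [List.cons.injEq, and_true]; omega

lemma sum_headD_of_bijOn {α M : Type*} [AddCommMonoid M] {s : Finset α} {φ : α → List ℕ}
    {m : ℕ} (h : Set.BijOn φ ↑s {L | L.length = 2 ∧ L.sum = m}) (f : ℕ → M) :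
    ∑ T ∈ s, f ((φ T).headD 0) = ∑ e ∈ Finset.Iic m, f e := by
  have hbij := (headD_bijOn_length_eq_two m).comp h
  rw [← Finset.coe_Iic] at hbij
  exact Finset.sum_nbij _ (fun T hT => hbij.mapsTo hT) hbij.injOn hbij.surjOn fun _ _ => rfl

lemma sum_splitCount {n k : ℕ} (hk : 2 ≤ k) (hkn : k + 2 ≤ n) :
    ∑ e ∈ Finset.Iic (n - 4), splitCount n k (e + 2) = (k - 1) * (n - k - 1) := by
  simp only [splitCount, Finset.card_filter]
  rw [Finset.sum_comm]
  have hinner : ∀ a ∈ Finset.Icc 1 (k - 1),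
      (∑ e ∈ Finset.Iic (n - 4), if a + 1 ≤ e + 2 ∧ k - a + 1 ≤ n - (e + 2) then 1 else 0)
        = n - k - 1 := by
    intro a ha
    rw [Finset.mem_Icc] at ha
    rw [← Finset.card_filter]
    have : (Finset.Iic (n - 4)).filter (fun e => a + 1 ≤ e + 2 ∧ k - a + 1 ≤ n - (e + 2))
        = Finset.Icc (a - 1) (a + n - k - 3) := by
      ext e
      simp only [Finset.mem_filter, Finset.mem_Iic, Finset.mem_Icc]
      omega
    rw [this, Nat.card_Icc]
    omega
  rw [Finset.sum_congr rfl hinner, Finset.sum_const, Nat.card_Icc, smul_eq_mul,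
    Nat.add_sub_cancel]

section Chords

variable {n : ℕ} [NeZero n]

lemma headD_phi_pair {i x y : ZMod n} (hlt : ord i x < ord i y) (h2 : 2 ≤ ord x y) :
    (phi i {x, y}).headD 0 + 2 = ord x y := by
  have hd : ord x y = ord i y - ord i x := ord_eq_sub_of_le hlt.le
  have := ord_lt i y
  have himage : ({x, y} : Finset (ZMod n)).image (ord i) = {ord i x, ord i y} := by
    simp [Finset.image_insert]
  rw [phi, himage, Finset.sort_pair hlt]
  change (ord i y + n - ord i x - 2) % n + 2 = ord x y
  rw [show ord i y + n - ord i x - 2 = n + (ord x y - 2) by omega, Nat.add_mod_left,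
    Nat.mod_eq_of_lt (by omega)]
  omega

lemma card_leftEndFiber_of_chord {k : ℕ} (hk : k < n) (i : ZMod n) {T : Finset (ZMod n)}
    (hT : T.card = 2) (hgap : ∀ x ∈ T, x + 1 ∉ T) :
    (leftEndFiber k T).card = splitCount n k ((phi i T).headD 0 + 2) := by
  obtain ⟨x, y, hlt, rfl⟩ := Finset.exists_eq_pair_lt_of_card_eq_two (ord_injective i) hT
  have hxy : x ≠ y := fun h => hlt.ne (h ▸ rfl)
  have h2 : 2 ≤ ord x y := by
    have := ord_pos hxy.symm
    by_contra! h1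
    refine hgap x (by simp) ?_
    rw [← add_natCast_ord x y, show ord x y = 1 by omega, Nat.cast_one]
    simp
  rw [headD_phi_pair hlt h2, card_leftEndFiber hk hxy]

end Chords

lemma natIntertwines_pair_iff {a b c d : ℕ} (hab : a < b) (hcd : c < d) :
    NatIntertwines {a, b} {c, d} ↔ a < c ∧ c < b ∧ b < d := by
  simp only [NatIntertwines, Finset.card_pair hab.ne, Finset.card_pair hcd.ne,
    Finset.sort_pair hab, Finset.sort_pair hcd, true_and]
  change List.IsChain _ [a, c, b, d] ↔ _
  simp

section Crossing

variable {n : ℕ}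

lemma image_ord_pair (i x y : ZMod n) :
    ({x, y} : Finset (ZMod n)).image (ord i) = {ord i x, ord i y} := by
  simp [Finset.image_insert]

lemma cycIntertwines_pair {i p p' q q' : ZMod n} (h1 : ord i p < ord i q)
    (h2 : ord i q < ord i p') (h3 : ord i p' < ord i q') :
    CycIntertwines {p, p'} {q, q'} :=
  ⟨i, by
    rw [image_ord_pair, image_ord_pair, natIntertwines_pair_iff (by omega) (by omega)]
    exact ⟨h1, h2, h3⟩⟩

variable [NeZero n]

lemma exists_ord_lt_of_cycIntertwines {I J : Finset (ZMod n)} (hI : I.card = 2)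
    (hJ : J.card = 2) (h : CycIntertwines I J) :
    ∃ i p p' q q', p ∈ I ∧ p' ∈ I ∧ q ∈ J ∧ q' ∈ J ∧
      ord i p < ord i q ∧ ord i q < ord i p' ∧ ord i p' < ord i q' := by
  obtain ⟨i, hi⟩ := h
  obtain ⟨p, p', hp, rfl⟩ := Finset.exists_eq_pair_lt_of_card_eq_two (ord_injective i) hI
  obtain ⟨q, q', hq, rfl⟩ := Finset.exists_eq_pair_lt_of_card_eq_two (ord_injective i) hJ
  rw [image_ord_pair, image_ord_pair, natIntertwines_pair_iff hp hq] at hi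
  exact ⟨i, p, p', q, q', by simp, by simp, by simp, by simp, hi⟩

lemma cycIntertwines_leftEnd_of_ord_lt {S S' : Finset (ZMod n)}
    (hS : (leftEnd S).card = 2) (hS' : (leftEnd S').card = 2) {i p p' q q' : ZMod n}
    (hp : p ∈ S \ S') (hp' : p' ∈ S \ S') (hq : q ∈ S' \ S) (hq' : q' ∈ S' \ S)
    (h1 : ord i p < ord i q) (h2 : ord i q < ord i p') (h3 : ord i p' < ord i q') :
    CycIntertwines (leftEnd S) (leftEnd S') ∨ CycIntertwines (leftEnd S') (leftEnd S) := by
  rw [Finset.mem_sdiff] at hp hp' hq hq'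
  have hq_p := ord_eq_sub_of_le (i := i) (x := q) (y := p) (by omega)
  have hp'_p := ord_eq_sub_of_le (i := i) (x := p') (y := p) (by omega)
  have hq'_p := ord_eq_sub_of_le (i := i) (x := q') (y := p) (by omega)
  have hp'_q := ord_eq_sub_of_le (i := i) (x := p') (y := q) (by omega)
  have hq'_p' := ord_eq_sub_of_le (i := i) (x := q') (y := p') (by omega)
  have := ord_lt i q'; have := ord_lt p q'
  obtain ⟨s, hs, hs0, hsq, -⟩ := exists_mem_leftEnd_between hp.2 _ q hq.1 rfl
  obtain ⟨t, ht, ht0, htp', -⟩ := exists_mem_leftEnd_between hq.2 _ p' hp'.1 rfl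
  obtain ⟨s', hs', hs'0, hs'q', -⟩ := exists_mem_leftEnd_between hp'.2 _ q' hq'.1 rfl
  obtain ⟨t', ht', ht'0, ht'p, -⟩ := exists_mem_leftEnd_between hq'.2 _ p hp.1 rfl
  have hpt := ord_eq_add_of_lt (i := p) (x := t) (y := q) (by omega)
  have hps' := ord_eq_add_of_lt (i := p) (x := s') (y := p') (by omega)
  have hpq' : p ≠ q' := fun h => hp.2 (h ▸ hq'.1)
  have hq'p := ord_swap hpq'
  have hpt' := ord_eq_add_ord_mod p t' q'
  have := ord_lt q' t'
  have hs_ne : s ≠ s' := fun h => by rw [h] at hsq; omega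
  rcases Nat.lt_or_ge (ord p q' + ord q' t') n with hlt | hge
  · -- `t'` lies strictly between `q'` and `p`: the pattern is `s < t < s' < t'`
    rw [Nat.mod_eq_of_lt hlt] at hpt'
    right
    rw [Finset.eq_pair_of_card_eq_two hS' hs hs' hs_ne,
      Finset.eq_pair_of_card_eq_two hS ht ht' (fun h => by subst h; omega)]
    exact cycIntertwines_pair (i := p) (by omega) (by omega) (by omega)
  · -- `t' = p`: the pattern is `t' < s < t < s'`
    rw [Nat.mod_eq_sub_mod hge, Nat.mod_eq_of_lt (by omega)] at hpt'
    left
    rw [Finset.eq_pair_of_card_eq_two hS' hs hs' hs_ne,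
      Finset.eq_pair_of_card_eq_two hS ht' ht (fun h => by subst h; omega)]
    exact cycIntertwines_pair (i := p) (by omega) (by omega) (by omega)

lemma cycIntertwines_leftEnd_of_cycLIntertwines {I J : Finset (ZMod n)}
    (hI : (leftEnd I).card = 2) (hJ : (leftEnd J).card = 2) (h : CycLIntertwines 2 I J) :
    CycIntertwines (leftEnd I) (leftEnd J) ∨ CycIntertwines (leftEnd J) (leftEnd I) := by
  obtain ⟨I', J', hI', hJ', hI'c, hJ'c, hc | hc⟩ := h
  · obtain ⟨i, p, p', q, q', hp, hp', hq, hq', h1, h2, h3⟩ :=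
      exists_ord_lt_of_cycIntertwines hI'c hJ'c hc
    exact cycIntertwines_leftEnd_of_ord_lt hI hJ (hI' hp) (hI' hp') (hJ' hq) (hJ' hq') h1 h2 h3
  · obtain ⟨i, p, p', q, q', hp, hp', hq, hq', h1, h2, h3⟩ :=
      exists_ord_lt_of_cycIntertwines hJ'c hI'c hc
    exact (cycIntertwines_leftEnd_of_ord_lt hJ hI (hJ' hp) (hJ' hp') (hI' hq) (hI' hq')
      h1 h2 h3).symm

end Crossing

theorem scott_snake_triangulation_general (n k : ℕ) (hk2 : 2 ≤ k) (hkn : k ≤ n - 2)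
    (𝕋 : Finset (Finset (ZMod n))) (h𝕋 : IsSlice n 2 𝕋) :
    (Ck n k 𝕋).ncard = (k - 1) * (n - k - 1) ∧
      ∀ I ∈ Ck n k 𝕋, ∀ J ∈ Ck n k 𝕋, ¬ CycLIntertwines 2 I J := by
  have : NeZero n := ⟨by omega⟩
  obtain ⟨-, hcard, hgap, hncr, i, hbij⟩ := h𝕋
  refine ⟨?_, ?_⟩
  · calc (Ck n k 𝕋).ncard
        = ∑ T ∈ 𝕋, (leftEndFiber k T).card := ncard_Ck k 𝕋
      _ = ∑ T ∈ 𝕋, splitCount n k ((phi i T).headD 0 + 2) :=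
        Finset.sum_congr rfl fun T hT =>
          card_leftEndFiber_of_chord (by omega) i (hcard T hT) (hgap T hT)
      _ = ∑ e ∈ Finset.Iic (n - 4), splitCount n k (e + 2) :=
        sum_headD_of_bijOn hbij fun e => splitCount n k (e + 2)
      _ = (k - 1) * (n - k - 1) := sum_splitCount hk2 (by omega)
  · rintro I ⟨-, hI⟩ J ⟨-, hJ⟩ hIJ
    rcases cycIntertwines_leftEnd_of_cycLIntertwines (hcard _ hI) (hcard _ hJ) hIJ with h | h
    exacts [hncr _ hI _ hJ h, hncr _ hJ _ hI h]

/-- Scott's theorem (Theorem 1 of [Scott]): for `2 ≤ k ≤ n-2`, if `𝕋` is a snake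
triangulation of the convex `n`-gon — encoded by its collection of chords, a
non-crossing collection of `n-3` `2`-subsets of `[n]` forming a slice — then
`C_k(𝕋)`, the collection of `k`-subsets of `[n]` that are disjoint unions of two cyclic
intervals whose starting points form a chord of `𝕋`, consists of `(k-1)(n-k-1)`
pairwise non-crossing `k`-subsets of `[n]`.  (Non-crossing = non-`2`-intertwining.) -/
theorem scott_snake_triangulation (n k : ℕ) (hn : 0 < n) (hk2 : 2 ≤ k) (hkn : k ≤ n - 2)
    (𝕋 : Finset (Finset (ZMod n))) (h𝕋 : IsSlice n 2 𝕋) :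
    (Ck n k 𝕋).ncard = (k - 1) * (n - k - 1) ∧
      ∀ I ∈ Ck n k 𝕋, ∀ J ∈ Ck n k 𝕋, ¬ CycLIntertwines 2 I J :=
  scott_snake_triangulation_general n k hk2 hkn 𝕋 h𝕋
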